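/- arXiv:2005.05356 — 5 statements merged into one kernel-verified Lean document; each statement's English description precedes it below -/
import Mathlib

section
/- The solution of the lower triangular linear system G x = f, where G has diagonal entries d_1,...,d_m (all nonzero), all strictly lower triangular entries equal to -c, and f is the constant vector with all entries c, is given by x_k = a_k * prod_{j=1}^{k-1} (1 + a_j), where a_k = c / d_k. -/
open Finset

private lemma sum_filter_lt_eq (m : ℕ) (k : Fin m) (f : Fin m → ℝ) :
    ∑ j ∈ univ.filter (fun j => j < k), f j
      = ∑ i ∈ Finset.range k.val, (if h : i < m then f ⟨i, h⟩ else 0) := by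
  refine Finset.sum_bij' (fun j _ => (j : ℕ)) (fun i hi => ⟨i, lt_trans (mem_range.mp hi) k.2⟩) ?_ ?_ ?_ ?_ ?_
  · intro a ha; simp only [mem_filter, mem_univ, true_and, Fin.lt_def] at ha
    exact mem_range.mpr ha
  · intro a ha
    simp only [mem_filter, mem_univ, true_and, Fin.lt_def]
    exact mem_range.mp ha
  · intro a ha; rfl
  · intro a ha; rfl
  · intro a ha; simp [a.2]

private lemma prod_filter_lt_eq (m : ℕ) (k : Fin m) (f : Fin m → ℝ) :
    ∏ j ∈ univ.filter (fun j => j < k), f j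
      = ∏ i ∈ Finset.range k.val, (if h : i < m then f ⟨i, h⟩ else 1) := by
  refine Finset.prod_bij' (fun j _ => (j : ℕ)) (fun i hi => ⟨i, lt_trans (mem_range.mp hi) k.2⟩) ?_ ?_ ?_ ?_ ?_
  · intro a ha; simp only [mem_filter, mem_univ, true_and, Fin.lt_def] at ha
    exact mem_range.mpr ha
  · intro a ha
    simp only [mem_filter, mem_univ, true_and, Fin.lt_def]
    exact mem_range.mp ha
  · intro a ha; rfl
  · intro a ha; rfl
  · intro a ha; simp [a.2]

theorem solution_of_special_lower_triangular_system
    (m : ℕ) (hm : 0 < m) (c : ℝ) (d : Fin m → ℝ) (hd : ∀ k, d k ≠ 0)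
    (G : Matrix (Fin m) (Fin m) ℝ)
    (hG : ∀ k j, G k j = if k = j then d k else if (j : ℕ) < k then -c else 0)
    (x : Fin m → ℝ) (hx : G.mulVec x = fun _ => c) :
    ∀ k : Fin m,
      x k = (c / d k) * ∏ j ∈ Finset.univ.filter (fun j => j < k), (1 + c / d j) := by
  set X : ℕ → ℝ := fun i => if h : i < m then x ⟨i, h⟩ else 0 with hX
  set A : ℕ → ℝ := fun i => if h : i < m then c / d ⟨i, h⟩ else 0 with hA
  -- row equation
  have row : ∀ k : Fin m, x k = (c / d k) * (1 + ∑ i ∈ Finset.range k.val, X i) := by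
    intro k
    have hk := congrFun hx k
    simp only [Matrix.mulVec, dotProduct] at hk
    have hsplit : ∀ j : Fin m, G k j * x j =
        (if k = j then d k * x k else 0) + (if j < k then -c * x j else 0) := by
      intro j
      rw [hG]
      rcases eq_or_ne k j with h | h
      · subst h; simp [lt_irrefl]
      · simp only [if_neg h, Fin.lt_def]
        split_ifs <;> ring
    rw [Finset.sum_congr rfl (fun j _ => hsplit j), Finset.sum_add_distrib,
      Finset.sum_ite_eq univ k (fun _ => d k * x k)] at hk
    simp only [mem_univ, if_true] at hk
    rw [← Finset.sum_filter, ← Finset.mul_sum] at hk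
    have hsum : ∑ j ∈ univ.filter (fun j => j < k), x j
        = ∑ i ∈ Finset.range k.val, X i := sum_filter_lt_eq m k x
    rw [hsum] at hk
    rw [div_mul_eq_mul_div, eq_div_iff (hd k)]
    linear_combination hk
  -- main induction
  have key : ∀ n, n ≤ m → 1 + ∑ i ∈ Finset.range n, X i = ∏ i ∈ Finset.range n, (1 + A i) := by
    intro n hn
    induction n with
    | zero => simp
    | succ n ih =>
      have hnm : n < m := hn
      have ihn := ih (le_of_lt hnm)
      rw [Finset.sum_range_succ, Finset.prod_range_succ, ← ihn]
      have hXn : X n = A n * (1 + ∑ i ∈ Finset.range n, X i) := by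
        have := row ⟨n, hnm⟩
        simp only [hX, hA, dif_pos hnm]
        simpa using this
      rw [hXn]; ring
  intro k
  have hprod : ∏ j ∈ univ.filter (fun j => j < k), (1 + c / d j)
      = ∏ i ∈ Finset.range k.val, (1 + A i) := by
    rw [prod_filter_lt_eq m k (fun j => 1 + c / d j)]
    refine Finset.prod_congr rfl fun i hi => ?_
    simp only [hA]
    split_ifs with h <;> simp
  rw [hprod, ← key k.val (le_of_lt k.2)]
  exact row k
end

section
/- Assume d_j > 0 for all j and c > 0. Let x be the solution of G x = f, y = |G| |x| (componentwise absolute values), and z = |G^{-1}| y. Then y_i = c (2 ω_i − 1) and z_i = a_i (2 ω_i − 1) + sum_{j=1}^{i-1} a_i a_j (ω_i / ω_{j+1}) (2 ω_j − 1). -/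
open Finset


noncomputable def DD (m : ℕ) (d : Fin m → ℝ) (k : ℕ) : ℝ := if h : k < m then d ⟨k, h⟩ else 1

noncomputable def PP (m : ℕ) (c : ℝ) (d : Fin m → ℝ) (n : ℕ) : ℝ :=
  ∏ k ∈ Finset.range n, (1 + c / DD m d k)

lemma DD_val {m : ℕ} (d : Fin m → ℝ) (j : Fin m) : DD m d j.val = d j := by
  simp [DD]

lemma DD_pos {m : ℕ} {d : Fin m → ℝ} (hd : ∀ k, 0 < d k) (n : ℕ) : 0 < DD m d n := by
  unfold DD; split <;> simp [hd]

lemma PP_zero (m : ℕ) (c : ℝ) (d : Fin m → ℝ) : PP m c d 0 = 1 := by simp [PP]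

lemma PP_succ (m : ℕ) (c : ℝ) (d : Fin m → ℝ) (n : ℕ) :
    PP m c d (n + 1) = PP m c d n * (1 + c / DD m d n) := by
  simp [PP, Finset.prod_range_succ]

lemma PP_pos {m : ℕ} {c : ℝ} {d : Fin m → ℝ} (hc : 0 < c) (hd : ∀ k, 0 < d k) (n : ℕ) :
    0 < PP m c d n := by
  apply Finset.prod_pos
  intro k _
  have := DD_pos hd (m := m) k
  positivity

lemma one_le_PP {m : ℕ} {c : ℝ} {d : Fin m → ℝ} (hc : 0 < c) (hd : ∀ k, 0 < d k) (n : ℕ) :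
    1 ≤ PP m c d n := by
  induction n with
  | zero => simp [PP]
  | succ n ih =>
    rw [PP_succ]
    have h1 := DD_pos hd (m := m) n
    have h2 : 0 ≤ c / DD m d n := by positivity
    nlinarith

lemma PP_tel {m : ℕ} (c : ℝ) (d : Fin m → ℝ) {a b : ℕ} (hab : a ≤ b) :
    ∑ k ∈ Finset.Ico a b, c / DD m d k * PP m c d k = PP m c d b - PP m c d a := by
  have h : ∀ k, c / DD m d k * PP m c d k = PP m c d (k + 1) - PP m c d k := by
    intro k; rw [PP_succ]; ring
  rw [Finset.sum_congr rfl (fun k _ => h k), Finset.sum_Ico_eq_sub _ hab,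
    Finset.sum_range_sub, Finset.sum_range_sub]
  ring

lemma sum_val_bij {M : Type*} [AddCommMonoid M] {m : ℕ} (s : Finset ℕ) (hs : ∀ n ∈ s, n < m)
    (F : ℕ → M) :
    ∑ k ∈ univ.filter (fun k : Fin m => (k : ℕ) ∈ s), F k.val = ∑ n ∈ s, F n := by
  refine Finset.sum_bij' (fun a _ => (a : ℕ)) (fun n hn => (⟨n, hs n hn⟩ : Fin m)) ?_ ?_ ?_ ?_ ?_
  · intro a ha; exact (mem_filter.mp ha).2
  · intro n hn; simp [hn]
  · intro a ha; rfl
  · intro n hn; rfl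
  · intro a ha; rfl

lemma prod_val_bij {M : Type*} [CommMonoid M] {m : ℕ} (s : Finset ℕ) (hs : ∀ n ∈ s, n < m)
    (F : ℕ → M) :
    ∏ k ∈ univ.filter (fun k : Fin m => (k : ℕ) ∈ s), F k.val = ∏ n ∈ s, F n := by
  refine Finset.prod_bij' (fun a _ => (a : ℕ)) (fun n hn => (⟨n, hs n hn⟩ : Fin m)) ?_ ?_ ?_ ?_ ?_
  · intro a ha; exact (mem_filter.mp ha).2
  · intro n hn; simp [hn]
  · intro a ha; rfl
  · intro n hn; rfl
  · intro a ha; rfl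

lemma split_sum {m : ℕ} (i : Fin m) (p : Fin m → Prop) [DecidablePred p] (f : Fin m → ℝ)
    (hpi : ∀ k, p k → k ≠ i) (h0 : ∀ k, k ≠ i → ¬ p k → f k = 0) :
    ∑ k, f k = f i + ∑ k ∈ univ.filter p, f k := by
  rw [← Finset.add_sum_erase _ f (mem_univ i)]
  congr 1
  refine (Finset.sum_subset ?_ ?_).symm
  · intro k hk
    rw [mem_filter] at hk
    exact mem_erase.mpr ⟨hpi k hk.2, mem_univ k⟩
  · intro k hk hk'
    exact h0 k (mem_erase.mp hk).1 (fun hpk => hk' (mem_filter.mpr ⟨mem_univ k, hpk⟩))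

lemma sum_filter_lt {m : ℕ} (i : Fin m) (F : ℕ → ℝ) :
    ∑ j ∈ univ.filter (fun j : Fin m => j < i), F j.val = ∑ k ∈ Finset.range i.val, F k := by
  have h : univ.filter (fun j : Fin m => j < i)
      = univ.filter (fun j : Fin m => (j : ℕ) ∈ Finset.range i.val) :=
    filter_congr (fun j _ => by simp only [Finset.mem_range, Fin.lt_def])
  rw [h]
  exact sum_val_bij _ (fun n hn => lt_trans (mem_range.mp hn) i.isLt) F

lemma prod_filter_lt {m : ℕ} (i : Fin m) (F : ℕ → ℝ) :
    ∏ j ∈ univ.filter (fun j : Fin m => j < i), F j.val = ∏ k ∈ Finset.range i.val, F k := by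
  have h : univ.filter (fun j : Fin m => j < i)
      = univ.filter (fun j : Fin m => (j : ℕ) ∈ Finset.range i.val) :=
    filter_congr (fun j _ => by simp only [Finset.mem_range, Fin.lt_def])
  rw [h]
  exact prod_val_bij _ (fun n hn => lt_trans (mem_range.mp hn) i.isLt) F

lemma prod_filter_le {m : ℕ} (i : Fin m) (F : ℕ → ℝ) :
    ∏ j ∈ univ.filter (fun j : Fin m => j ≤ i), F j.val = ∏ k ∈ Finset.range (i.val + 1), F k := by
  have h : univ.filter (fun j : Fin m => j ≤ i)
      = univ.filter (fun j : Fin m => (j : ℕ) ∈ Finset.range (i.val + 1)) :=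
    filter_congr (fun j _ => by simp only [Finset.mem_range, Fin.le_def, Nat.lt_succ_iff])
  rw [h]
  exact prod_val_bij _ (fun n hn => lt_of_lt_of_le (mem_range.mp hn) i.isLt) F

lemma sum_filter_Ico {m : ℕ} (i j : Fin m) (F : ℕ → ℝ) :
    ∑ k ∈ univ.filter (fun k : Fin m => j ≤ k ∧ k < i), F k.val
      = ∑ n ∈ Finset.Ico j.val i.val, F n := by
  have h : univ.filter (fun k : Fin m => j ≤ k ∧ k < i)
      = univ.filter (fun k : Fin m => (k : ℕ) ∈ Finset.Ico j.val i.val) :=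
    filter_congr (fun k _ => by simp only [Finset.mem_Ico, Fin.le_def, Fin.lt_def])
  rw [h]
  exact sum_val_bij _ (fun n hn => lt_trans (Finset.mem_Ico.mp hn).2 i.isLt) F

noncomputable def Ginv (m : ℕ) (c : ℝ) (d : Fin m → ℝ) : Matrix (Fin m) (Fin m) ℝ :=
  fun k j => if k = j then 1 / d k
    else if j < k then c / d k * (1 / d j) * (PP m c d k.val / PP m c d (j.val + 1)) else 0

lemma G_mul_Ginv {m : ℕ} {c : ℝ} {d : Fin m → ℝ} (hc : 0 < c) (hd : ∀ k, 0 < d k)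
    {G : Matrix (Fin m) (Fin m) ℝ}
    (hG : ∀ k j, G k j = if k = j then d k else if (j : ℕ) < k then -c else 0) :
    G * Ginv m c d = 1 := by
  have hd0 : ∀ k, d k ≠ 0 := fun k => (hd k).ne'
  have hP0 : ∀ n, PP m c d n ≠ 0 := fun n => (PP_pos hc hd n).ne'
  have hGzero : ∀ i k : Fin m, i < k → G i k = 0 := by
    intro i k h
    rw [hG, if_neg (ne_of_lt h), if_neg (not_lt.mpr (le_of_lt (Fin.lt_def.mp h)))]
  have hGdiag : ∀ i, G i i = d i := fun i => by rw [hG, if_pos rfl]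
  have hGlow : ∀ i k : Fin m, k < i → G i k = -c := by
    intro i k h
    rw [hG, if_neg (ne_of_lt h).symm, if_pos (Fin.lt_def.mp h)]
  have hIdiag : ∀ i, Ginv m c d i i = 1 / d i := fun i => by simp [Ginv]
  have hIzero : ∀ k j : Fin m, k < j → Ginv m c d k j = 0 := by
    intro k j h
    simp only [Ginv]
    rw [if_neg (ne_of_lt h), if_neg (not_lt.mpr (le_of_lt h))]
  have hIlow : ∀ k j : Fin m, j < k →
      Ginv m c d k j = c / d k * (1 / d j) * (PP m c d k.val / PP m c d (j.val + 1)) := by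
    intro k j h
    simp only [Ginv]
    rw [if_neg (ne_of_lt h).symm, if_pos h]
  ext i j
  rw [Matrix.mul_apply]
  rcases lt_trichotomy i j with hij | hij | hij
  · rw [Matrix.one_apply_ne (ne_of_lt hij)]
    apply Finset.sum_eq_zero
    intro k _
    rcases lt_or_ge k j with hk | hk
    · rw [hIzero k j hk, mul_zero]
    · rw [hGzero i k (lt_of_lt_of_le hij hk), zero_mul]
  · subst hij
    rw [Matrix.one_apply_eq]
    rw [split_sum i (fun _ => False) (fun k => G i k * Ginv m c d k i)
      (fun k h => h.elim) ?_]
    · rw [Finset.filter_false, Finset.sum_empty, hGdiag, hIdiag]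
      field_simp
      exact (add_zero _).trans (div_self (hd0 i))
    · intro k hk _
      show G i k * Ginv m c d k i = 0
      rcases lt_or_gt_of_ne hk with h | h
      · rw [hIzero k i h, mul_zero]
      · rw [hGzero i k h, zero_mul]
  · rw [Matrix.one_apply_ne (ne_of_lt hij).symm]
    rw [split_sum i (fun k => j ≤ k ∧ k < i) (fun k => G i k * Ginv m c d k j)
      (fun k hk => ne_of_lt hk.2) ?_]
    · have hterm : ∀ k ∈ univ.filter (fun k : Fin m => j ≤ k ∧ k < i),
          G i k * Ginv m c d k j = (fun n => -c * (if n = j.val then 1 / d j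
            else c / DD m d n * (1 / d j) * (PP m c d n / PP m c d (j.val + 1)))) k.val := by
        intro k hk
        obtain ⟨hjk, hki⟩ := (Finset.mem_filter.mp hk).2
        rw [hGlow i k hki]
        simp only
        congr 1
        by_cases hkj : k = j
        · subst hkj
          rw [hIdiag, if_pos rfl]
        · have hjk' : j < k := lt_of_le_of_ne hjk (Ne.symm hkj)
          rw [hIlow k j hjk', if_neg (fun h => hkj (Fin.ext h)), DD_val]
      have hstep : ∑ k ∈ univ.filter (fun k : Fin m => j ≤ k ∧ k < i), G i k * Ginv m c d k j
          = ∑ n ∈ Finset.Ico j.val i.val, (-c * (if n = j.val then 1 / d j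
            else c / DD m d n * (1 / d j) * (PP m c d n / PP m c d (j.val + 1)))) := by
        rw [← sum_filter_Ico i j]
        exact Finset.sum_congr rfl hterm
      rw [hstep]
      have hji : j.val < i.val := Fin.lt_def.mp hij
      rw [Finset.sum_eq_sum_Ico_succ_bot hji, if_pos rfl]
      have h2 : ∑ n ∈ Finset.Ico (j.val + 1) i.val, (-c * (if n = j.val then 1 / d j
            else c / DD m d n * (1 / d j) * (PP m c d n / PP m c d (j.val + 1))))
          = ∑ n ∈ Finset.Ico (j.val + 1) i.val,
              (c / DD m d n * PP m c d n) * (-c * (1 / d j) / PP m c d (j.val + 1)) := by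
        refine Finset.sum_congr rfl ?_
        intro n hn
        have := (Finset.mem_Ico.mp hn).1
        rw [if_neg (by omega)]
        ring
      rw [h2, ← Finset.sum_mul, PP_tel c d hji]
      rw [hGdiag, hIlow i j hij]
      have h1 := hd0 i
      have h2 := hd0 j
      have h3 := hP0 (j.val + 1)
      field_simp
      ring
    · intro k hk hnk
      show G i k * Ginv m c d k j = 0
      rcases lt_or_gt_of_ne hk with h | h
      · have hkj : k < j := by
          by_contra hkj
          exact hnk ⟨not_lt.mp hkj, h⟩
        rw [hIzero k j hkj, mul_zero]
      · rw [hGzero i k h, zero_mul]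

theorem skeel_intermediate_results
    (m : ℕ) (hm : 0 < m) (c : ℝ) (hc : 0 < c) (d : Fin m → ℝ) (hd : ∀ k, 0 < d k)
    (G : Matrix (Fin m) (Fin m) ℝ)
    (hG : ∀ k j, G k j = if k = j then d k else if (j : ℕ) < k then -c else 0)
    (x : Fin m → ℝ) (hx : G.mulVec x = fun _ => c)
    (y z : Fin m → ℝ)
    (hy : y = (G.map (fun t => |t|)).mulVec (fun i => |x i|))
    (hz : z = ((G⁻¹).map (fun t => |t|)).mulVec y) :
    (∀ i : Fin m,
        y i = c * (2 * (∏ j ∈ Finset.univ.filter (fun j => j < i), (1 + c / d j)) - 1)) ∧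
      (∀ i : Fin m,
        z i = (c / d i) *
            (2 * (∏ j ∈ Finset.univ.filter (fun j => j < i), (1 + c / d j)) - 1) +
          ∑ j ∈ Finset.univ.filter (fun j => j < i),
            (c / d i) * (c / d j) *
              ((∏ l ∈ Finset.univ.filter (fun l => l < i), (1 + c / d l)) /
                (∏ l ∈ Finset.univ.filter (fun l => l ≤ j), (1 + c / d l))) *
              (2 * (∏ l ∈ Finset.univ.filter (fun l => l < j), (1 + c / d l)) - 1)) := by
  have hd0 : ∀ k, d k ≠ 0 := fun k => (hd k).ne'
  have hPpos : ∀ n, 0 < PP m c d n := PP_pos hc hd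
  have hPne : ∀ n, PP m c d n ≠ 0 := fun n => (hPpos n).ne'
  have hGzero : ∀ i k : Fin m, i < k → G i k = 0 := by
    intro i k h
    rw [hG, if_neg (ne_of_lt h), if_neg (not_lt.mpr (le_of_lt (Fin.lt_def.mp h)))]
  have hGdiag : ∀ i, G i i = d i := fun i => by rw [hG, if_pos rfl]
  have hGlow : ∀ i k : Fin m, k < i → G i k = -c := by
    intro i k h
    rw [hG, if_neg (ne_of_lt h).symm, if_pos (Fin.lt_def.mp h)]
  have hIdiag : ∀ i, Ginv m c d i i = 1 / d i := fun i => by simp [Ginv]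
  have hIzero : ∀ i k : Fin m, i < k → Ginv m c d i k = 0 := by
    intro i k h
    simp only [Ginv]
    rw [if_neg (ne_of_lt h), if_neg (not_lt.mpr (le_of_lt h))]
  have hIlow : ∀ k j : Fin m, j < k →
      Ginv m c d k j = c / d k * (1 / d j) * (PP m c d k.val / PP m c d (j.val + 1)) := by
    intro k j h
    simp only [Ginv]
    rw [if_neg (ne_of_lt h).symm, if_pos h]
  have hrow : ∀ i : Fin m,
      d i * x i - c * ∑ j ∈ Finset.univ.filter (fun j : Fin m => j < i), x j = c := by
    intro i
    have h := congrFun hx i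
    simp only [Matrix.mulVec, dotProduct] at h
    rw [split_sum i (fun j => j < i) (fun j => G i j * x j) (fun k hk => ne_of_lt hk)
      (fun k hk hnk => by
        show G i k * x k = 0
        rw [hGzero i k (lt_of_le_of_ne (not_lt.mp hnk) (Ne.symm hk)), zero_mul])] at h
    rw [hGdiag] at h
    have hs2 : ∑ j ∈ Finset.univ.filter (fun j : Fin m => j < i), G i j * x j
        = -c * ∑ j ∈ Finset.univ.filter (fun j : Fin m => j < i), x j :=
      calc ∑ j ∈ Finset.univ.filter (fun j : Fin m => j < i), G i j * x j
          = ∑ j ∈ Finset.univ.filter (fun j : Fin m => j < i), -c * x j :=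
            Finset.sum_congr rfl (fun j hj => by
              rw [hGlow i j (Finset.mem_filter.mp hj).2])
        _ = -c * ∑ j ∈ Finset.univ.filter (fun j : Fin m => j < i), x j :=
            (Finset.mul_sum _ _ _).symm
    rw [hs2] at h
    linear_combination h
  have key : ∀ n, ∀ h : n < m, x ⟨n, h⟩ = c / d ⟨n, h⟩ * PP m c d n := by
    intro n
    induction n using Nat.strong_induction_on with
    | _ n IH =>
      intro h
      have hr := hrow ⟨n, h⟩
      have hsum : ∑ j ∈ Finset.univ.filter (fun j : Fin m => j < (⟨n, h⟩ : Fin m)), x j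
          = PP m c d n - 1 := by
        have h1 : ∀ j ∈ Finset.univ.filter (fun j : Fin m => j < (⟨n, h⟩ : Fin m)),
            x j = (fun k => c / DD m d k * PP m c d k) j.val := by
          intro j hj
          have hji : j.val < n := Fin.lt_def.mp (Finset.mem_filter.mp hj).2
          have h2 := IH j.val hji j.isLt
          simp only
          rw [DD_val]
          exact h2
        rw [Finset.sum_congr rfl h1,
          sum_filter_lt (⟨n, h⟩ : Fin m) (fun k => c / DD m d k * PP m c d k),
          Finset.range_eq_Ico, PP_tel c d (Nat.zero_le n), PP_zero]
      rw [hsum] at hr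
      have h2 : d ⟨n, h⟩ * x ⟨n, h⟩ = c * PP m c d n := by linear_combination hr
      have hdn := hd0 ⟨n, h⟩
      field_simp
      linear_combination h2
  have hxval : ∀ i : Fin m, x i = c / d i * PP m c d i.val := fun i => key i.val i.isLt
  have hxnn : ∀ i : Fin m, 0 ≤ x i := fun i => by
    rw [hxval]
    have h1 := hd i
    have h2 := hPpos i.val
    positivity
  have hsumx : ∀ i : Fin m,
      ∑ j ∈ Finset.univ.filter (fun j : Fin m => j < i), x j = PP m c d i.val - 1 := by
    intro i
    have h1 : ∀ j ∈ Finset.univ.filter (fun j : Fin m => j < i),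
        x j = (fun k => c / DD m d k * PP m c d k) j.val := by
      intro j hj
      simp only
      rw [DD_val]
      exact hxval j
    rw [Finset.sum_congr rfl h1,
      sum_filter_lt i (fun k => c / DD m d k * PP m c d k),
      Finset.range_eq_Ico, PP_tel c d (Nat.zero_le _), PP_zero]
  have hyval : ∀ i : Fin m, y i = c * (2 * PP m c d i.val - 1) := by
    intro i
    rw [hy]
    simp only [Matrix.mulVec, dotProduct, Matrix.map_apply]
    rw [split_sum i (fun j => j < i) (fun j => |G i j| * |x j|) (fun k hk => ne_of_lt hk)
      (fun k hk hnk => by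
        show |G i k| * |x k| = 0
        rw [hGzero i k (lt_of_le_of_ne (not_lt.mp hnk) (Ne.symm hk)), abs_zero, zero_mul])]
    have h1 : ∀ j ∈ Finset.univ.filter (fun j : Fin m => j < i), |G i j| * |x j| = c * x j := by
      intro j hj
      rw [hGlow i j (Finset.mem_filter.mp hj).2, abs_neg, abs_of_pos hc,
        abs_of_nonneg (hxnn j)]
    rw [Finset.sum_congr rfl h1, ← Finset.mul_sum, hsumx, hGdiag, abs_of_pos (hd i),
      abs_of_nonneg (hxnn i), hxval]
    have h2 := hd0 i
    field_simp
    ring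
  have hplt : ∀ i : Fin m,
      ∏ j ∈ Finset.univ.filter (fun j : Fin m => j < i), (1 + c / d j) = PP m c d i.val := by
    intro i
    have h1 : ∀ j ∈ Finset.univ.filter (fun j : Fin m => j < i),
        (1 + c / d j) = (fun k => 1 + c / DD m d k) j.val := by
      intro j hj
      simp only
      rw [DD_val]
    rw [Finset.prod_congr rfl h1, prod_filter_lt i (fun k => 1 + c / DD m d k)]
    rfl
  have hple : ∀ j : Fin m,
      ∏ l ∈ Finset.univ.filter (fun l : Fin m => l ≤ j), (1 + c / d l)
        = PP m c d (j.val + 1) := by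
    intro j
    have h1 : ∀ l ∈ Finset.univ.filter (fun l : Fin m => l ≤ j),
        (1 + c / d l) = (fun k => 1 + c / DD m d k) l.val := by
      intro l hl
      simp only
      rw [DD_val]
    rw [Finset.prod_congr rfl h1, prod_filter_le j (fun k => 1 + c / DD m d k)]
    rfl
  refine ⟨fun i => by rw [hplt i]; exact hyval i, fun i => ?_⟩
  have hGinv : G⁻¹ = Ginv m c d := Matrix.inv_eq_right_inv (G_mul_Ginv hc hd hG)
  rw [hz, hGinv]
  simp only [Matrix.mulVec, dotProduct, Matrix.map_apply]
  rw [split_sum i (fun j => j < i) (fun j => |Ginv m c d i j| * y j) (fun k hk => ne_of_lt hk)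
    (fun k hk hnk => by
      show |Ginv m c d i k| * y k = 0
      rw [hIzero i k (lt_of_le_of_ne (not_lt.mp hnk) (Ne.symm hk)), abs_zero, zero_mul])]
  have hterm : ∀ j ∈ Finset.univ.filter (fun j : Fin m => j < i),
      |Ginv m c d i j| * y j
        = (c / d i) * (c / d j) *
            ((∏ l ∈ Finset.univ.filter (fun l : Fin m => l < i), (1 + c / d l)) /
              (∏ l ∈ Finset.univ.filter (fun l : Fin m => l ≤ j), (1 + c / d l))) *
            (2 * (∏ l ∈ Finset.univ.filter (fun l : Fin m => l < j), (1 + c / d l)) - 1) := by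
    intro j hj
    have hji : j < i := (Finset.mem_filter.mp hj).2
    have hpos : (0:ℝ) < c / d i * (1 / d j) * (PP m c d i.val / PP m c d (j.val + 1)) := by
      have := hd i
      have := hd j
      have := hPpos i.val
      have := hPpos (j.val + 1)
      positivity
    rw [hIlow i j hji, abs_of_pos hpos, hyval j, hplt i, hple j, hplt j]
    ring
  rw [Finset.sum_congr rfl hterm, hIdiag i, hyval i, hplt i,
    abs_of_pos (show (0:ℝ) < 1 / d i by have := hd i; positivity)]
  ring
end

section
/- Let A in R^{m×m} be the lower triangular matrix with A_{jj} = a + j b, A_{ij} = -c for i > j, and A_{ij} = 0 for i < j, where b ≠ 0. Define z_k = binom(γ + k − 1, k) with γ = c/b, where binom(x,k) = prod_{i=0}^{k-1}(x − i)/k! is the generalized binomial coefficient. Let X in R^{m×m} be lower triangular with X_{ij} = z_{i−j} for i ≥ j and 0 otherwise. Then for each j, the j-th column of X is an eigenvector of A with eigenvalue λ_j = a + j b; that is, A X_{·j} = (a + j b) X_{·j}. -/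
open Finset

/-- Generalized binomial coefficient binom(x, k) = x(x-1)⋯(x-k+1)/k!. -/
noncomputable def genBinom (x : ℝ) (k : ℕ) : ℝ :=
  (∏ i ∈ Finset.range k, (x - i)) / (Nat.factorial k)

lemma genBinom_pascal (x : ℝ) (k : ℕ) :
    genBinom x k + genBinom x (k+1) = genBinom (x+1) (k+1) := by
  have h1 : (∏ i ∈ Finset.range (k+1), (x - (i:ℕ))) =
      (∏ i ∈ Finset.range k, (x - (i:ℕ))) * (x - k) := Finset.prod_range_succ _ _
  have h2 : (∏ i ∈ Finset.range (k+1), (x + 1 - (i:ℕ))) =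
      (x + 1) * ∏ i ∈ Finset.range k, (x - (i:ℕ)) := by
    rw [Finset.prod_range_succ']
    have : ∀ i ∈ Finset.range k, (x + 1 - ((i+1 : ℕ):ℝ)) = x - (i:ℕ) := by
      intro i _; push_cast; ring
    rw [Finset.prod_congr rfl this]
    push_cast; ring
  unfold genBinom
  rw [h1, h2, Nat.factorial_succ]
  have hk : (Nat.factorial k : ℝ) ≠ 0 := by positivity
  have hk1 : ((k:ℝ) + 1) ≠ 0 := by positivity
  push_cast
  field_simp
  ring

lemma genBinom_hockey (γ : ℝ) (M : ℕ) :
    ∑ n ∈ Finset.range (M+1), genBinom (γ + n - 1) n = genBinom (γ + M) M := by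
  induction M with
  | zero => simp [genBinom]
  | succ M ih =>
    rw [Finset.sum_range_succ, ih]
    have h := genBinom_pascal (γ + M) M
    have e1 : γ + ((M:ℝ) + 1) - 1 = γ + M := by ring
    have e2 : γ + ((M:ℝ) + 1) = γ + M + 1 := by ring
    push_cast
    rw [e1, e2]
    exact h

lemma genBinom_key (γ : ℝ) (N : ℕ) :
    ((N:ℝ) + 1) * genBinom (γ + N) (N+1) = γ * genBinom (γ + N) N := by
  unfold genBinom
  rw [Finset.prod_range_succ, Nat.factorial_succ]
  have hk : (Nat.factorial N : ℝ) ≠ 0 := by positivity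
  have hk1 : ((N:ℝ) + 1) ≠ 0 := by positivity
  push_cast
  field_simp
  ring

theorem eigenvectors_of_parameterized_matrix
    (m : ℕ) (hm : 0 < m) (a b c : ℝ) (hb : b ≠ 0)
    (A : Matrix (Fin m) (Fin m) ℝ)
    (hA : ∀ i j, A i j =
      if i = j then a + ((j : ℕ) + 1) * b else if (j : ℕ) < i then -c else 0)
    (X : Matrix (Fin m) (Fin m) ℝ)
    (hX : ∀ i j, X i j =
      if (j : ℕ) ≤ i then genBinom (c / b + ((i : ℕ) - (j : ℕ)) - 1) ((i : ℕ) - (j : ℕ))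
      else 0) :
    ∀ j : Fin m, A.mulVec (fun i => X i j) = fun i => (a + ((j : ℕ) + 1) * b) * X i j := by
  intro j
  funext i
  simp only [Matrix.mulVec, dotProduct]
  by_cases hij : (j:ℕ) ≤ (i:ℕ)
  · -- j ≤ i
    set g : ℕ → ℝ := fun n =>
      (if (i:ℕ) = n then a + ((n:ℕ) + 1) * b else if n < (i:ℕ) then -c else 0) *
      (if (j:ℕ) ≤ n then genBinom (c / b + ((n:ℝ) - ((j:ℕ):ℝ)) - 1) (n - (j:ℕ)) else 0)
      with hg
    have hsum : (∑ k : Fin m, A i k * X k j) = ∑ n ∈ Finset.range m, g n := by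
      rw [← Fin.sum_univ_eq_sum_range]
      apply Finset.sum_congr rfl
      intro k _
      rw [hA, hX, hg]
      simp only [Fin.ext_iff]
    rw [hsum]
    have hsub : Finset.Icc (j:ℕ) (i:ℕ) ⊆ Finset.range m := by
      intro n hn
      simp only [Finset.mem_Icc] at hn
      simp only [Finset.mem_range]
      exact lt_of_le_of_lt hn.2 i.isLt
    have hzero : ∀ n ∈ Finset.range m, n ∉ Finset.Icc (j:ℕ) (i:ℕ) → g n = 0 := by
      intro n _ hn
      simp only [Finset.mem_Icc, not_and_or, not_le] at hn
      rw [hg]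
      rcases hn with h | h
      · simp [not_le.mpr h]
      · have h1 : (i:ℕ) ≠ n := by omega
        have h2 : ¬ n < (i:ℕ) := by omega
        simp [h1, h2]
    rw [← Finset.sum_subset hsub hzero]
    have hicc : Finset.Icc (j:ℕ) (i:ℕ) = Finset.Ico (j:ℕ) ((i:ℕ)+1) := by
      rw [Finset.Ico_add_one_right_eq_Icc]
    rw [hicc, Finset.sum_Ico_succ_top (by omega), Finset.sum_Ico_eq_sum_range]
    set N := (i:ℕ) - (j:ℕ) with hN
    have hgi : g (i:ℕ) = (a + ((i:ℕ) + 1) * b) *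
        genBinom (c / b + (N:ℝ) - 1) N := by
      rw [hg]
      simp only [if_pos rfl, if_pos hij]
      congr 2
      · rw [hN]; push_cast [Nat.cast_sub hij]; ring
    have hXij : X i j = genBinom (c / b + (N:ℝ) - 1) N := by
      rw [hX, if_pos hij, hN]
      congr 1
      push_cast [Nat.cast_sub hij]
      ring
    have hgn : ∀ n ∈ Finset.range N, g ((j:ℕ) + n) = -c * genBinom (c / b + (n:ℝ) - 1) n := by
      intro n hn
      simp only [Finset.mem_range] at hn
      rw [hg]
      have h1 : (i:ℕ) ≠ (j:ℕ) + n := by omega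
      have h2 : (j:ℕ) + n < (i:ℕ) := by omega
      have h3 : (j:ℕ) ≤ (j:ℕ) + n := by omega
      simp only [if_neg h1, if_pos h2, if_pos h3]
      congr 2
      · push_cast; ring
      · omega
    rw [Finset.sum_congr rfl hgn, hgi, hXij]
    rw [← Finset.mul_sum]
    -- now case on N
    rcases Nat.eq_zero_or_pos N with h0 | hpos
    · have hij' : (i:ℕ) = (j:ℕ) := by omega
      rw [h0]
      simp [hij']
    · obtain ⟨M, hM⟩ : ∃ M, N = M + 1 := ⟨N - 1, by omega⟩
      rw [hM, genBinom_hockey (c/b) M]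
      have hkey := genBinom_key (c/b) M
      have hiN : ((i:ℕ):ℝ) = ((j:ℕ):ℝ) + (M:ℝ) + 1 := by
        have h : (i:ℕ) = (j:ℕ) + M + 1 := by omega
        rw [h]; push_cast; ring
      have hc : (c / b) * b = c := by field_simp
      rw [hiN]
      push_cast
      have harg : c / b + ((M:ℝ) + 1) - 1 = c / b + M := by ring
      rw [harg]
      linear_combination b * hkey + genBinom (c/b + (M:ℝ)) M * hc
  · -- i < j : everything is 0
    have hXij : X i j = 0 := by rw [hX, if_neg hij]
    rw [hXij, mul_zero]
    apply Finset.sum_eq_zero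
    intro k _
    rw [hA, hX]
    by_cases hk : (j:ℕ) ≤ (k:ℕ)
    · have h1 : i ≠ k := by
        intro h; rw [h] at hij; exact hij hk
      have h2 : ¬ (k:ℕ) < (i:ℕ) := by omega
      simp [h1, h2]
    · simp [hk]
end

section
/- If α < 0 is not an integer, then y_k = binom(α + k, k) is nonzero for all k, and y_k → 0 as k → ∞. -/
open Finset Filter

theorem binom_ne_zero_and_tendsto_zero (α : ℝ) (hα : α < 0) (hint : ∀ n : ℤ, α ≠ n) :
    (∀ k : ℕ, (∏ j ∈ Finset.Icc 1 k, (1 + α / j)) ≠ 0) ∧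
      Tendsto (fun k : ℕ => ∏ j ∈ Finset.Icc 1 k, (1 + α / j)) atTop (nhds 0) := by
  have hfac : ∀ j : ℕ, 1 ≤ j → (1 + α / j) ≠ 0 := by
    intro j hj h0
    have hj0 : (j : ℝ) ≠ 0 := by positivity
    have : α = -(j : ℝ) := by field_simp at h0; linarith
    exact hint (-(j : ℤ)) (by push_cast; linarith)
  have hIcc : ∀ k : ℕ, Finset.Icc 1 k = Finset.Ioc 0 k := by
    intro k; ext x; simp [Nat.lt_iff_add_one_le]
  constructor
  · intro k
    refine Finset.prod_ne_zero_iff.mpr fun j hj => hfac j (Finset.mem_Icc.mp hj).1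
  · -- tendsto zero
    set N : ℕ := ⌈-α⌉₊ with hNdef
    have hNα : -α ≤ (N : ℝ) := Nat.le_ceil _
    have hpos : ∀ j : ℕ, N < j → 0 < 1 + α / j := by
      intro j hj
      have hj0 : (0:ℝ) < j := by
        have : 0 < j := by omega
        exact_mod_cast this
      have : -α < (j : ℝ) := lt_of_le_of_lt hNα (by exact_mod_cast hj)
      rw [← sub_pos]; field_simp; linarith
    set C : ℝ := |∏ j ∈ Finset.Ioc 0 N, (1 + α / j)| with hC
    -- the exponent sum
    have hsum : Tendsto (fun k : ℕ => α * ∑ j ∈ Finset.Ioc N k, (1 / (j:ℝ))) atTop atBot := by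
      have h1 : Tendsto (fun k : ℕ => ∑ j ∈ Finset.Ioc N k, (1 / (j:ℝ))) atTop atTop := by
        have hh := Real.tendsto_sum_range_one_div_nat_succ_atTop
        have heq : ∀ᶠ k in atTop, (∑ i ∈ Finset.range k, 1 / ((i:ℝ) + 1)) -
            (∑ i ∈ Finset.range N, 1 / ((i:ℝ) + 1)) = ∑ j ∈ Finset.Ioc N k, (1 / (j:ℝ)) := by
          filter_upwards [eventually_ge_atTop N] with k hk
          have hr : ∀ m : ℕ, (∑ i ∈ Finset.range m, 1 / ((i:ℝ) + 1)) =
              ∑ j ∈ Finset.Ioc 0 m, (1 / (j:ℝ)) := by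
            intro m
            rw [← Nat.Ico_zero_eq_range, ← hIcc]
            rw [Finset.sum_Ico_eq_sum_range]
            · rw [show Finset.Icc 1 m = Finset.Ico 1 (m+1) by rfl,
                Finset.sum_Ico_eq_sum_range]
              simp [add_comm]
          rw [hr, hr, ← Finset.sum_Ioc_consecutive _ (Nat.zero_le N) hk]
          ring
        exact Tendsto.congr' heq ((tendsto_atTop_add_const_right _ _ hh))
      exact h1.const_mul_atTop_of_neg hα
    have habs : Tendsto (fun k : ℕ => |∏ j ∈ Finset.Icc 1 k, (1 + α / j)|) atTop (nhds 0) := by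
      have hub : ∀ᶠ k : ℕ in atTop, |∏ j ∈ Finset.Icc 1 k, (1 + α / j)| ≤
          C * Real.exp (α * ∑ j ∈ Finset.Ioc N k, (1 / (j:ℝ))) := by
        filter_upwards [eventually_ge_atTop N] with k hk
        rw [hIcc, ← Finset.prod_Ioc_consecutive _ (Nat.zero_le N) hk, abs_mul]
        gcongr
        rw [abs_of_nonneg (Finset.prod_nonneg fun j hj =>
          (hpos j (Finset.mem_Ioc.mp hj).1).le), mul_sum, Real.exp_sum]
        refine Finset.prod_le_prod (fun j hj => (hpos j (Finset.mem_Ioc.mp hj).1).le)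
          (fun j hj => ?_)
        have := Real.add_one_le_exp (α * (1 / (j:ℝ)))
        rw [mul_one_div] at this ⊢
        linarith
      have hlb : ∀ᶠ k : ℕ in atTop, (0:ℝ) ≤ |∏ j ∈ Finset.Icc 1 k, (1 + α / j)| :=
        Eventually.of_forall fun k => abs_nonneg _
      have hC0 : Tendsto (fun k : ℕ => C * Real.exp (α * ∑ j ∈ Finset.Ioc N k, (1 / (j:ℝ))))
          atTop (nhds 0) := by
        have := (Real.tendsto_exp_atBot.comp hsum).const_mul C
        simpa using this
      exact squeeze_zero' hlb hub hC0
    exact (tendsto_zero_iff_abs_tendsto_zero _).mpr habs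
end

section
/- Let b > 0, c > 0 with γ = c/b > 1, and let B in R^{n×n} have B_{kk} = k b, B_{kj} = -c for k > j, B_{kj} = 0 for k < j, and f in R^n with all components c. Then Skeel's condition number κ_∞(B, f) = ‖ |B^{-1}| |B| |x| ‖_∞ / ‖x‖_∞, where x is the solution of B x = f, satisfies κ_∞(B, f) ≤ 2 (1 + γ log((γ + n − 1)/γ)). -/
open Finset

noncomputable def Ssum {n : ℕ} (y : Fin n → ℝ) (m : ℕ) : ℝ :=
  ∑ j ∈ univ.filter (fun j : Fin n => (j : ℕ) < m), y j

lemma tri_row {n : ℕ} (d e : ℝ) (y : Fin n → ℝ) (k : Fin n) :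
    ∑ j, (if k = j then d else if (j : ℕ) < (k : ℕ) then e else 0) * y j
      = d * y k + e * Ssum y (k : ℕ) := by
  unfold Ssum
  rw [← Finset.add_sum_erase _ _ (Finset.mem_univ k)]
  congr 1
  · simp
  · rw [Finset.mul_sum]
    rw [show (univ.filter (fun j : Fin n => (j : ℕ) < (k : ℕ)))
        = (univ.erase k).filter (fun j : Fin n => (j : ℕ) < (k : ℕ)) by
      ext j
      simp only [Finset.mem_filter, Finset.mem_erase, Finset.mem_univ, true_and, and_true]
      constructor
      · intro h; exact ⟨by rintro rfl; exact lt_irrefl _ h, h⟩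
      · exact fun h => h.2]
    rw [Finset.sum_filter]
    apply Finset.sum_congr rfl
    intro j hj
    rw [Finset.mem_erase] at hj
    rw [if_neg (by rintro rfl; exact hj.1 rfl)]
    split_ifs with h
    · ring
    · ring

lemma Ssum_zero {n : ℕ} (y : Fin n → ℝ) : Ssum y 0 = 0 := by
  simp [Ssum]

lemma Ssum_succ {n : ℕ} (y : Fin n → ℝ) (m : ℕ) (hm : m < n) :
    Ssum y (m + 1) = y ⟨m, hm⟩ + Ssum y m := by
  unfold Ssum
  rw [show univ.filter (fun j : Fin n => (j : ℕ) < m + 1)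
      = insert ⟨m, hm⟩ (univ.filter (fun j : Fin n => (j : ℕ) < m)) by
    ext j
    simp only [Finset.mem_filter, Finset.mem_insert, Finset.mem_univ, true_and]
    constructor
    · intro h
      rcases Nat.lt_succ_iff_lt_or_eq.mp h with h | h
      · exact Or.inr h
      · exact Or.inl (Fin.ext h)
    · rintro (rfl | h)
      · exact Nat.lt_succ_self m
      · exact Nat.lt_succ_of_lt h]
  rw [Finset.sum_insert (by simp)]

lemma Ssum_nonneg {n : ℕ} (y : Fin n → ℝ) (hy : ∀ j, 0 ≤ y j) (m : ℕ) : 0 ≤ Ssum y m :=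
  Finset.sum_nonneg fun j _ => hy j

lemma mulVec_row {n : ℕ} (b c : ℝ) (B : Matrix (Fin n) (Fin n) ℝ)
    (hB : ∀ k j, B k j =
      if k = j then ((k : ℕ) + 1) * b else if (j : ℕ) < k then -c else 0)
    (y : Fin n → ℝ) (k : Fin n) :
    B.mulVec y k = ((k : ℕ) + 1) * b * y k + (-c) * Ssum y (k : ℕ) := by
  simp only [Matrix.mulVec, dotProduct, hB]
  exact tri_row _ _ y k

lemma absB_row {n : ℕ} (b c : ℝ) (hb : 0 < b) (hc : 0 < c) (B : Matrix (Fin n) (Fin n) ℝ)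
    (hB : ∀ k j, B k j =
      if k = j then ((k : ℕ) + 1) * b else if (j : ℕ) < k then -c else 0)
    (y : Fin n → ℝ) (k : Fin n) :
    (B.map (fun t => |t|)).mulVec y k = ((k : ℕ) + 1) * b * y k + c * Ssum y (k : ℕ) := by
  simp only [Matrix.mulVec, dotProduct, Matrix.map_apply]
  have : ∀ j, |B k j| = if k = j then ((k : ℕ) + 1) * b else if (j : ℕ) < k then c else 0 := by
    intro j
    rw [hB]
    split_ifs
    · exact abs_of_pos (by positivity)
    · rw [abs_neg]; exact abs_of_pos hc
    · exact abs_zero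
  simp only [this]
  exact tri_row _ _ y k

lemma fin_mono {n : ℕ} (y : Fin n → ℝ)
    (hstep : ∀ m (hm1 : m + 1 < n), y ⟨m, by omega⟩ ≤ y ⟨m + 1, hm1⟩) :
    ∀ k l : Fin n, (k : ℕ) ≤ (l : ℕ) → y k ≤ y l := by
  have aux : ∀ d m (h : m + d < n), y ⟨m, by omega⟩ ≤ y ⟨m + d, h⟩ := by
    intro d
    induction d with
    | zero => intro m h; exact le_of_eq (congrArg y (Fin.ext rfl))
    | succ d ih =>
      intro m h
      calc y ⟨m, by omega⟩ ≤ y ⟨m + d, by omega⟩ := ih m (by omega)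
        _ ≤ y ⟨m + d + 1, by omega⟩ := hstep (m + d) (by omega)
        _ = y ⟨m + (d + 1), h⟩ := congrArg y (Fin.mk_eq_mk.mpr (by omega))
  intro k l hkl
  have h := aux ((l : ℕ) - (k : ℕ)) (k : ℕ) (by omega)
  rwa [show (⟨(k : ℕ), by omega⟩ : Fin n) = k from Fin.ext rfl,
    show (⟨(k : ℕ) + ((l : ℕ) - (k : ℕ)), by omega⟩ : Fin n) = l from Fin.ext (by simp only [Fin.val_mk]; omega)] at h

lemma fin_sup_eq {n : ℕ} (hn : 0 < n) (y : Fin n → ℝ) (hy : ∀ i, 0 ≤ y i)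
    (hmono : ∀ k l : Fin n, (k : ℕ) ≤ (l : ℕ) → y k ≤ y l) :
    (⨆ i : Fin n, |y i|) = y ⟨n - 1, by omega⟩ := by
  have : Nonempty (Fin n) := ⟨⟨0, hn⟩⟩
  apply le_antisymm
  · apply ciSup_le
    intro i
    rw [abs_of_nonneg (hy i)]
    exact hmono i ⟨n - 1, by omega⟩ (by simp only [Fin.val_mk]; have := i.isLt; omega)
  · rw [show y ⟨n - 1, by omega⟩ = |y ⟨n - 1, by omega⟩| from (abs_of_nonneg (hy _)).symm]
    exact le_ciSup (f := fun i => |y i|) (Set.Finite.bddAbove (Set.finite_range _)) ⟨n - 1, by omega⟩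

lemma sum_inv_le_log (γ : ℝ) (hγ : 0 < γ) (m : ℕ) :
    ∑ j ∈ Finset.range m, 1 / (γ + j + 1) ≤ Real.log (γ + m) - Real.log γ := by
  induction m with
  | zero => simp
  | succ m ih =>
    rw [Finset.sum_range_succ]
    have ha : (0:ℝ) < γ + m := by positivity
    have hb : (0:ℝ) < γ + m + 1 := by positivity
    have hlog : Real.log (γ + m) - Real.log (γ + m + 1) ≤ (γ + m) / (γ + m + 1) - 1 := by
      rw [← Real.log_div (ne_of_gt ha) (ne_of_gt hb)]
      exact Real.log_le_sub_one_of_pos (by positivity)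
    have : 1 / (γ + m + 1) ≤ Real.log (γ + m + 1) - Real.log (γ + m) := by
      have h2 : (γ + m) / (γ + m + 1) - 1 = -(1 / (γ + m + 1)) := by field_simp; ring
      rw [h2] at hlog
      linarith
    push_cast
    rw [show γ + (↑m + 1) = γ + ↑m + 1 by ring]
    linarith [this, ih]

set_option maxHeartbeats 1600000 in
theorem skeel_condition_number_bound
    (n : ℕ) (hn : 0 < n) (b c : ℝ) (hb : 0 < b) (hc : 0 < c) (hγ : 1 < c / b)
    (B : Matrix (Fin n) (Fin n) ℝ)
    (hB : ∀ k j, B k j =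
      if k = j then ((k : ℕ) + 1) * b else if (j : ℕ) < k then -c else 0)
    (x : Fin n → ℝ) (hx : B.mulVec x = fun _ => c) :
    (⨆ i : Fin n,
        |(((B⁻¹).map (fun t => |t|)).mulVec
            ((B.map (fun t => |t|)).mulVec (fun j => |x j|))) i|) /
        (⨆ i : Fin n, |x i|) ≤
      2 * (1 + (c / b) * Real.log ((c / b + n - 1) / (c / b))) := by
  classical
  have hbc : b < c := (one_lt_div hb).mp hγ
  -- x row equations
  have hxrow : ∀ k : Fin n, ((k : ℕ) + 1) * b * x k = c + c * Ssum x (k : ℕ) := by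
    intro k
    have h1 := congrFun hx k
    rw [mulVec_row b c B hB x k] at h1
    linarith
  -- positivity of x
  have hxpos : ∀ k : Fin n, 0 < x k := by
    have key : ∀ m : ℕ, ∀ k : Fin n, (k : ℕ) < m → 0 < x k := by
      intro m
      induction m with
      | zero => intro k hk; exact absurd hk (Nat.not_lt_zero _)
      | succ m ih =>
        intro k hk
        rcases Nat.lt_succ_iff_lt_or_eq.mp hk with h | h
        · exact ih k h
        · have hS : 0 ≤ Ssum x (k : ℕ) := by
            unfold Ssum
            exact Finset.sum_nonneg fun j hj => (ih j (by
              have := (Finset.mem_filter.mp hj).2; omega)).le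
          have hrow := hxrow k
          have hpos : (0:ℝ) < ((k : ℕ) + 1) * b := by positivity
          nlinarith
    exact fun k => key ((k : ℕ) + 1) k (Nat.lt_succ_self _)
  -- invertibility
  have hdetunit : IsUnit B.det := by
    have hlt : B.BlockTriangular OrderDual.toDual := by
      intro i j hij
      have hij' : i < j := hij
      have hij'' : (i : ℕ) < (j : ℕ) := hij'
      rw [hB, if_neg (by intro h; rw [h] at hij''; omega),
        if_neg (by omega)]
    rw [Matrix.det_of_lowerTriangular B hlt]
    apply isUnit_iff_ne_zero.mpr
    apply Finset.prod_ne_zero_iff.mpr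
    intro k _
    rw [hB k k, if_pos rfl]
    positivity
  have hBB : B * B⁻¹ = 1 := Matrix.mul_nonsing_inv B hdetunit
  have hinvrow : ∀ k j : Fin n, ((k : ℕ) + 1) * b * (B⁻¹ k j)
      = (if k = j then (1:ℝ) else 0) + c * Ssum (fun i => B⁻¹ i j) (k : ℕ) := by
    intro k j
    have h1 : (B * B⁻¹) k j = (1 : Matrix (Fin n) (Fin n) ℝ) k j := by rw [hBB]
    rw [Matrix.mul_apply, Matrix.one_apply] at h1
    simp only [hB] at h1
    rw [tri_row] at h1
    linarith
  have hinv_nonneg : ∀ k j : Fin n, 0 ≤ B⁻¹ k j := by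
    have key : ∀ m : ℕ, ∀ k : Fin n, (k : ℕ) < m → ∀ j, 0 ≤ B⁻¹ k j := by
      intro m
      induction m with
      | zero => intro k hk; exact absurd hk (Nat.not_lt_zero _)
      | succ m ih =>
        intro k hk j
        rcases Nat.lt_succ_iff_lt_or_eq.mp hk with h | h
        · exact ih k h j
        · have hS : 0 ≤ Ssum (fun i => B⁻¹ i j) (k : ℕ) := by
            unfold Ssum
            exact Finset.sum_nonneg fun i hi => ih i (by
              have := (Finset.mem_filter.mp hi).2; omega) j
          have hrow := hinvrow k j
          have hpos : (0:ℝ) < ((k : ℕ) + 1) * b := by positivity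
          have hδ : (0:ℝ) ≤ (if k = j then (1:ℝ) else 0) := by positivity
          nlinarith
    exact fun k j => key ((k : ℕ) + 1) k (Nat.lt_succ_self _) j
  -- the vectors v and z
  set v : Fin n → ℝ := fun k => ((k : ℕ) + 1) * b * x k + c * Ssum x (k : ℕ) with hv
  have hxabs : (fun j => |x j|) = x := funext fun j => abs_of_pos (hxpos j)
  have habsBx : (B.map (fun t => |t|)).mulVec (fun j => |x j|) = v := by
    funext k
    rw [hxabs, absB_row b c hb hc B hB x k]
  have hmapinv : (B⁻¹).map (fun t => |t|) = B⁻¹ := by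
    ext k j
    exact abs_of_nonneg (hinv_nonneg k j)
  set z : Fin n → ℝ := B⁻¹.mulVec v with hz
  have hw : ((B⁻¹).map (fun t => |t|)).mulVec
      ((B.map (fun t => |t|)).mulVec (fun j => |x j|)) = z := by
    rw [habsBx, hmapinv]
  have hBz : B.mulVec z = v := by
    rw [hz, Matrix.mulVec_mulVec, hBB, Matrix.one_mulVec]
  have hzrow : ∀ k : Fin n, ((k : ℕ) + 1) * b * z k = v k + c * Ssum z (k : ℕ) := by
    intro k
    have h1 := congrFun hBz k
    rw [mulVec_row b c B hB z k] at h1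
    linarith
  have hSx_nonneg : ∀ m, 0 ≤ Ssum x m := Ssum_nonneg x (fun j => (hxpos j).le)
  have hv_nonneg : ∀ k : Fin n, 0 ≤ v k := fun k =>
    add_nonneg (mul_nonneg (by positivity) (hxpos k).le)
      (mul_nonneg hc.le (hSx_nonneg _))
  have hz_nonneg : ∀ k : Fin n, 0 ≤ z k := by
    have key : ∀ m : ℕ, ∀ k : Fin n, (k : ℕ) < m → 0 ≤ z k := by
      intro m
      induction m with
      | zero => intro k hk; exact absurd hk (Nat.not_lt_zero _)
      | succ m ih =>
        intro k hk
        rcases Nat.lt_succ_iff_lt_or_eq.mp hk with h | h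
        · exact ih k h
        · have hS : 0 ≤ Ssum z (k : ℕ) := by
            unfold Ssum
            exact Finset.sum_nonneg fun j hj => ih j (by
              have := (Finset.mem_filter.mp hj).2; omega)
          have hrow := hzrow k
          have hpos : (0:ℝ) < ((k : ℕ) + 1) * b := by positivity
          nlinarith [hv_nonneg k]
    exact fun k => key ((k : ℕ) + 1) k (Nat.lt_succ_self _)
  -- successor relations
  have hxsucc : ∀ m (hm : m < n) (hm1 : m + 1 < n),
      ((m:ℝ) + 2) * b * x ⟨m + 1, hm1⟩ = ((m:ℝ) + 1) * b * x ⟨m, hm⟩ + c * x ⟨m, hm⟩ := by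
    intro m hm hm1
    have h1 := hxrow ⟨m + 1, hm1⟩
    have h2 := hxrow ⟨m, hm⟩
    simp only [Fin.val_mk] at h1 h2
    rw [Ssum_succ x m hm] at h1
    push_cast at h1 h2 ⊢
    linarith
  have hzsucc : ∀ m (hm : m < n) (hm1 : m + 1 < n),
      ((m:ℝ) + 2) * b * z ⟨m + 1, hm1⟩
        = ((m:ℝ) + 1) * b * z ⟨m, hm⟩ + c * z ⟨m, hm⟩ + 2 * c * x ⟨m, hm⟩ := by
    intro m hm hm1
    have h1 := hzrow ⟨m + 1, hm1⟩
    have h2 := hzrow ⟨m, hm⟩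
    simp only [hv, Fin.val_mk] at h1 h2
    rw [Ssum_succ z m hm, Ssum_succ x m hm] at h1
    have hxs := hxsucc m hm hm1
    push_cast at h1 h2 ⊢
    linarith
  -- monotonicity
  have hxmono : ∀ k l : Fin n, (k : ℕ) ≤ (l : ℕ) → x k ≤ x l := by
    apply _root_.fin_mono
    intro m hm1
    have hm : m < n := by omega
    have h := hxsucc m hm hm1
    have h2 := hxpos ⟨m, hm⟩
    show x ⟨m, hm⟩ ≤ x ⟨m + 1, hm1⟩
    nlinarith [mul_pos (sub_pos.mpr hbc) h2, (show (0:ℝ) < ((m:ℝ)+2)*b by positivity)]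
  have hzmono : ∀ k l : Fin n, (k : ℕ) ≤ (l : ℕ) → z k ≤ z l := by
    apply _root_.fin_mono
    intro m hm1
    have hm : m < n := by omega
    have h := hzsucc m hm hm1
    have h2 := hz_nonneg ⟨m, hm⟩
    have h3 := hxpos ⟨m, hm⟩
    show z ⟨m, hm⟩ ≤ z ⟨m + 1, hm1⟩
    nlinarith [mul_nonneg (sub_pos.mpr hbc).le h2, mul_pos hc h3,
      (show (0:ℝ) < ((m:ℝ)+2)*b by positivity)]
  have hlast : n - 1 < n := by omega
  have hxsup : (⨆ i : Fin n, |x i|) = x ⟨n - 1, hlast⟩ :=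
    fin_sup_eq hn x (fun i => (hxpos i).le) hxmono
  have hzsup : (⨆ i : Fin n, |z i|) = z ⟨n - 1, hlast⟩ :=
    fin_sup_eq hn z hz_nonneg hzmono
  -- closed form for the ratio
  have hratio : ∀ m (hm : m < n),
      z ⟨m, hm⟩ = x ⟨m, hm⟩
        * (1 + 2 * (c / b) * ∑ j ∈ Finset.range m, 1 / (c / b + j + 1)) := by
    intro m
    induction m with
    | zero =>
      intro hm
      simp only [Finset.range_zero, Finset.sum_empty, mul_zero, add_zero, mul_one]
      have h1 := hzrow ⟨0, hm⟩
      simp only [hv, Fin.val_mk] at h1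
      rw [Ssum_zero, Ssum_zero] at h1
      push_cast at h1
      have hbz : b * z ⟨0, hm⟩ = b * x ⟨0, hm⟩ := by linarith
      exact mul_left_cancel₀ hb.ne' hbz
    | succ m ih =>
      intro hm1
      have hm : m < n := by omega
      have hzs := hzsucc m hm hm1
      have hxs := hxsucc m hm hm1
      have hzm := ih hm
      rw [Finset.sum_range_succ]
      have hne1 : ((m:ℝ) + 2) * b ≠ 0 := by positivity
      have hne2 : c / b + (m:ℝ) + 1 ≠ 0 := by positivity
      have hx' : x ⟨m + 1, hm1⟩
          = (((m:ℝ) + 1) * b * x ⟨m, hm⟩ + c * x ⟨m, hm⟩) / (((m:ℝ) + 2) * b) := by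
        rw [eq_div_iff hne1]; linarith
      rw [hzm] at hzs
      have hz' : z ⟨m + 1, hm1⟩
          = (((m:ℝ) + 1) * b * (x ⟨m, hm⟩ * (1 + 2 * (c / b) * ∑ j ∈ Finset.range m, 1 / (c / b + j + 1)))
            + c * (x ⟨m, hm⟩ * (1 + 2 * (c / b) * ∑ j ∈ Finset.range m, 1 / (c / b + j + 1)))
            + 2 * c * x ⟨m, hm⟩) / (((m:ℝ) + 2) * b) := by
        rw [eq_div_iff hne1]; linarith
      rw [hz', hx']
      push_cast
      field_simp
      ring
  -- conclusion
  rw [hw, hzsup, hxsup, hratio (n - 1) hlast]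
  have hxl := hxpos ⟨n - 1, hlast⟩
  rw [mul_comm, mul_div_assoc, div_self (ne_of_gt hxl), mul_one]
  have hγ0 : 0 < c / b := div_pos hc hb
  have hsum := sum_inv_le_log (c / b) hγ0 (n - 1)
  have hn1 : (1:ℝ) ≤ (n:ℝ) := by exact_mod_cast hn
  have hlog : Real.log ((c / b + n - 1) / (c / b))
      = Real.log (c / b + ((n - 1 : ℕ) : ℝ)) - Real.log (c / b) := by
    rw [Real.log_div (by push_cast [Nat.cast_sub hn]; nlinarith) (ne_of_gt hγ0)]
    congr 2
    push_cast [Nat.cast_sub hn]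
    ring
  rw [hlog]
  nlinarith [mul_le_mul_of_nonneg_left hsum (by positivity : (0:ℝ) ≤ 2 * (c / b))]
end
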